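/- Let $X_t = \exp(mt + \sigma B_t)$ be GBM starting at 1 with augmented natural filtration $(\mathcal{F}_t)$, let $L^1$ be a random variable independent of $\mathcal{F}_T$ with distribution function $F_{L^1}$, and define $\tau = \inf\{t > 0 : X_t \le L^1\}$ and $M_t = \inf_{0 \le u < t} X_u$. Then for $0 \le t < T$, $\mathbb{P}(\tau > t \mid \mathcal{F}_t) = F_{L^1}(M_t)$ almost surely, where $F_{L^1}(\ell) = \mathbb{P}(L^1 < \ell)$ (the left-continuous CDF evaluated with strict inequality). -/

import Mathlib

open MeasureTheory ProbabilityTheory Real Set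

/-- The standard normal cumulative distribution function. -/
noncomputable def stdNormalCDF (x : ℝ) : ℝ :=
  ((ProbabilityTheory.gaussianReal 0 1) (Set.Iic x)).toReal

/-- The standard normal probability density function. -/
noncomputable def stdNormalPDF (x : ℝ) : ℝ :=
  (Real.sqrt (2 * Real.pi))⁻¹ * Real.exp (-x ^ 2 / 2)

/-- `B` is a standard Brownian motion under `P`: starts at `0`, has continuous paths,
Gaussian increments `B t - B s ~ N(0, t-s)`, and increments independent of the past. -/
structure IsStandardBM {Ω : Type*} [MeasurableSpace Ω] (P : Measure Ω)
    (B : ℝ → Ω → ℝ) : Prop where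
  init : ∀ ω, B 0 ω = 0
  meas : ∀ t, Measurable (B t)
  cont : ∀ ω, Continuous fun t => B t ω
  indep : ∀ s t : ℝ, 0 ≤ s → s ≤ t →
    Indep (MeasurableSpace.comap (fun ω => B t ω - B s ω) inferInstance)
      (⨆ u ∈ Set.Icc (0:ℝ) s, MeasurableSpace.comap (B u) inferInstance) P
  gauss : ∀ s t : ℝ, 0 ≤ s → s ≤ t →
    P.map (fun ω => B t ω - B s ω) = gaussianReal 0 (Real.toNNReal (t - s))

/-- The natural filtration of a process `X` at time `t`: `σ(X u : 0 ≤ u ≤ t)`. -/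
noncomputable def natF {Ω : Type*} (X : ℝ → Ω → ℝ) (t : ℝ) : MeasurableSpace Ω :=
  ⨆ u ∈ Set.Icc (0:ℝ) t, MeasurableSpace.comap (X u) inferInstance

/-- Running minimum of `X` over `[s, t)`, with the convention that it equals `X s`
when the interval is empty. -/
noncomputable def runMin {Ω : Type*} (X : ℝ → Ω → ℝ) (s t : ℝ) (ω : Ω) : ℝ :=
  if t ≤ s then X s ω else sInf ((fun u => X u ω) '' Set.Ico s t)

/-- The default (hitting) time `τ = inf {s > 0 : X s ≤ L s}`, valued in `ENNReal`
(`∞` if no default ever occurs). -/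
noncomputable def hitTime {Ω : Type*} (X : ℝ → Ω → ℝ) (L : ℝ → Ω → ℝ) (ω : Ω) : ENNReal :=
  ⨅ (s : {s : ℝ // 0 < s ∧ X s ω ≤ L s ω}), ENNReal.ofReal s.1

/-! `L` is independent of the path up to `T`, so freezing `M_t` gives
`P(L < M_t ∣ 𝓕_t) = F_L(M_t)`. It remains to see that `{τ > t}` and `{L < M_t}` agree up to a
null set. Continuity gives `{L < M_t} ⊆ {τ > t}`. Conversely, surviving with `M_t ≤ L` forces the
minimum of `X` over `[0, t]` to sit at time `0`, so `X > 1` on some `(0, u]`, i.e.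
`B s > -(m/σ) s` for all small `s > 0`. Along `s = 2⁻ᵏ` this is a tail event of the independent
dyadic increments of `B`, hence has probability `0` or `1` (Kolmogorov), and it is not `1`
because `P(B s ≥ -√s)` is a fixed number `< 1`. -/

open Filter Topology
open scoped ENNReal

section NaturalFiltration

variable {Ω : Type*} {X : ℝ → Ω → ℝ} {s t : ℝ}

lemma natF_mono (h : s ≤ t) : natF X s ≤ natF X t :=
  iSup₂_mono' fun u hu => ⟨u, ⟨hu.1, hu.2.trans h⟩, le_rfl⟩

lemma measurable_natF {u : ℝ} (hu : u ∈ Icc 0 t) : Measurable[natF X t] (X u) :=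
  measurable_iff_comap_le.2 <|
    le_iSup₂ (f := fun u (_ : u ∈ Icc 0 t) => MeasurableSpace.comap (X u) inferInstance) u hu

lemma natF_le [MeasurableSpace Ω] (hX : ∀ u, Measurable (X u)) (t : ℝ) :
    natF X t ≤ ‹MeasurableSpace Ω› :=
  iSup₂_le fun u _ => measurable_iff_comap_le.1 (hX u)

end NaturalFiltration

section Paths

variable {Ω : Type*} {X : ℝ → Ω → ℝ} {t : ℝ} {ω : Ω}

lemma runMin_le (hc : Continuous fun u => X u ω) (ht : 0 ≤ t) {s : ℝ} (hs : s ∈ Icc 0 t) :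
    runMin X 0 t ω ≤ X s ω := by
  rcases ht.eq_or_lt with rfl | ht
  · rw [Icc_self, mem_singleton_iff] at hs
    simp [runMin, hs]
  · have hbdd : BddBelow ((fun u => X u ω) '' Ico 0 t) :=
      (isCompact_Icc.image hc).bddBelow.mono (image_mono Ico_subset_Icc_self)
    have hIco : Ico 0 t ⊆ {u | runMin X 0 t ω ≤ X u ω} := fun u hu => by
      change runMin X 0 t ω ≤ X u ω
      rw [runMin, if_neg ht.not_ge]
      exact csInf_le hbdd (mem_image_of_mem _ hu)
    have hIcc := (isClosed_le continuous_const hc).closure_subset_iff.mpr hIco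
    rw [closure_Ico ht.ne] at hIcc
    exact hIcc hs

lemma le_runMin (ht : 0 ≤ t) {a : ℝ} (h : ∀ s ∈ Icc 0 t, a ≤ X s ω) : a ≤ runMin X 0 t ω := by
  unfold runMin
  split_ifs with h0
  · exact h 0 ⟨le_rfl, ht⟩
  · exact le_csInf ((nonempty_Ico.2 (not_le.1 h0)).image _)
      (forall_mem_image.2 fun s hs => h s (Ico_subset_Icc_self hs))

lemma lt_runMin (hc : Continuous fun u => X u ω) (ht : 0 ≤ t) {a : ℝ}
    (h : ∀ s ∈ Icc 0 t, a < X s ω) : a < runMin X 0 t ω := by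
  obtain ⟨s, hs, hmin⟩ := isCompact_Icc.exists_isMinOn (nonempty_Icc.2 ht) hc.continuousOn
  exact (h s hs).trans_le (le_runMin ht hmin)

lemma runMin_eq_iInf_projIcc (hc : Continuous fun u => X u ω) (ht : 0 ≤ t) :
    runMin X 0 t ω = ⨅ u : ℝ, X (projIcc 0 t ht u) ω := by
  have hle : ∀ u, runMin X 0 t ω ≤ X (projIcc 0 t ht u) ω :=
    fun u => runMin_le hc ht (projIcc 0 t ht u).2
  refine le_antisymm (le_ciInf hle) (le_runMin ht fun s hs => ?_)
  simpa [projIcc_of_mem ht hs] using ciInf_le ⟨_, forall_mem_range.2 hle⟩ s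

lemma measurable_runMin (hc : ∀ ω, Continuous fun u => X u ω) (ht : 0 ≤ t) :
    Measurable[natF X t] (runMin X 0 t) := by
  have hq : runMin X 0 t = fun ω => ⨅ q : range ((↑) : ℚ → ℝ), X (projIcc 0 t ht q) ω := by
    funext ω
    rw [runMin_eq_iInf_projIcc (hc ω) ht]
    exact (Rat.denseRange_cast.ciInf' (f := fun u => X (projIcc 0 t ht u) ω)
      ((hc ω).comp (continuous_subtype_val.comp continuous_projIcc))).symm
  have : Countable (range ((↑) : ℚ → ℝ)) := (countable_range _).to_subtype
  rw [hq]
  exact Measurable.iInf fun q => measurable_natF (projIcc 0 t ht q).2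

variable {L : Ω → ℝ}

lemma lt_hitTime_of_lt_runMin (hc : Continuous fun u => X u ω) (ht : 0 ≤ t)
    (h : L ω < runMin X 0 t ω) : ENNReal.ofReal t < hitTime X (fun _ ω' => L ω') ω := by
  have hL : ∀ s ∈ Icc 0 t, L ω < X s ω := fun s hs => h.trans_le (runMin_le hc ht hs)
  obtain ⟨ε, hε, hball⟩ := Metric.eventually_nhds_iff.1
    ((hc.tendsto t).eventually (lt_mem_nhds (hL t ⟨ht, le_rfl⟩)))
  have hfar : ∀ s : {s : ℝ // 0 < s ∧ X s ω ≤ L ω}, ENNReal.ofReal (t + ε / 2) ≤ ENNReal.ofReal s :=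
    fun ⟨s, hs0, hs⟩ => ENNReal.ofReal_le_ofReal <| by
      by_contra! hs_near
      rcases le_or_gt s t with hst | hts
      · exact (hL s ⟨hs0.le, hst⟩).not_ge hs
      · exact (hball (by rw [Real.dist_eq, abs_lt]; constructor <;> linarith)).not_ge hs
  calc ENNReal.ofReal t < ENNReal.ofReal (t + ε / 2) :=
        (ENNReal.ofReal_lt_ofReal_iff (by linarith)).2 (by linarith)
    _ ≤ hitTime X (fun _ ω' => L ω') ω := le_iInf hfar

lemma exists_forall_lt_of_lt_hitTime (h : ENNReal.ofReal t < hitTime X (fun _ ω' => L ω') ω) :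
    ∃ u, t < u ∧ ∀ s ∈ Ioc 0 u, L ω < X s ω := by
  obtain ⟨u, -, htu, hu⟩ := ENNReal.lt_iff_exists_real_btwn.1 h
  refine ⟨u, (ENNReal.ofReal_lt_ofReal_iff'.1 htu).1, fun s hs => ?_⟩
  by_contra! hXs
  exact (hu.trans_le ((iInf_le (fun s : {s : ℝ // 0 < s ∧ X s ω ≤ L ω} => ENNReal.ofReal s.1)
    ⟨s, hs.1, hXs⟩).trans (ENNReal.ofReal_le_ofReal hs.2))).false

lemma eventually_one_lt_of_lt_hitTime (hc : Continuous fun u => X u ω) (hX0 : X 0 ω = 1)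
    (ht : 0 ≤ t) (hτ : ENNReal.ofReal t < hitTime X (fun _ ω' => L ω') ω)
    (hM : runMin X 0 t ω ≤ L ω) : ∀ᶠ s in 𝓝[>] 0, 1 < X s ω := by
  obtain ⟨u, htu, hu⟩ := exists_forall_lt_of_lt_hitTime hτ
  have h1L : 1 ≤ L ω := by
    by_contra! hL1
    refine hM.not_gt (lt_runMin hc ht fun s hs => ?_)
    rcases hs.1.eq_or_lt with rfl | hs0
    · rwa [hX0]
    · exact hu s ⟨hs0, hs.2.trans htu.le⟩
  filter_upwards [Ioc_mem_nhdsGT (ht.trans_lt htu)] with s hs using h1L.trans_lt (hu s hs)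

end Paths

section ZeroOne

variable {Ω : Type*}

lemma iIndep_of_indep_of_le {mΩ : MeasurableSpace Ω} {m F : ℕ → MeasurableSpace Ω} {μ : Measure Ω}
    [IsProbabilityMeasure μ] (hind : ∀ i, Indep (m i) (F i) μ)
    (hle : ∀ i j, i < j → m j ≤ F i) : iIndep m μ := by
  rw [iIndep_iff]
  intro s
  induction s using Finset.strongInduction with
  | _ s ih =>
    intro f hf
    rcases s.eq_empty_or_nonempty with rfl | hs
    · simp
    obtain ⟨i, hi, hmin⟩ : ∃ i ∈ s, ∀ j ∈ s, i ≤ j :=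
      ⟨s.min' hs, s.min'_mem hs, fun j hj => s.min'_le j hj⟩
    have hlater : MeasurableSet[F i] (⋂ j ∈ s.erase i, f j) :=
      .biInter (s.erase i).countable_toSet fun j hj =>
        hle i j ((hmin j (Finset.mem_of_mem_erase hj)).lt_of_ne (Finset.ne_of_mem_erase hj).symm) _
          (hf j (Finset.mem_of_mem_erase hj))
    rw [← Finset.insert_erase hi, Finset.set_biInter_insert,
      Finset.prod_insert (Finset.notMem_erase i s),
      (Indep_iff _ _ _).1 (hind i) _ _ (hf i hi) hlater,
      ih _ (Finset.erase_ssubset hi) fun j hj => hf j (Finset.mem_of_mem_erase hj)]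

lemma measurableSet_limsup_setOf_eventually {s : ℕ → MeasurableSpace Ω} {E : ℕ → Set Ω}
    (hE : ∀ k, MeasurableSet[⨆ j ≥ k, s j] (E k)) :
    MeasurableSet[limsup s atTop] {ω | ∀ᶠ k in atTop, ω ∈ E k} := by
  rw [limsup_eq_iInf_iSup_of_nat, MeasurableSpace.measurableSet_iInf]
  intro n
  have hshift : {ω | ∀ᶠ k in atTop, ω ∈ E k} = ⋃ K, ⋂ k ≥ K + n, E k := by
    ext ω
    simp only [eventually_atTop, mem_iUnion, mem_iInter]
    exact ⟨fun ⟨K, hK⟩ => ⟨K, fun k hk => hK k (by omega)⟩, fun ⟨K, hK⟩ => ⟨K + n, hK⟩⟩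
  rw [hshift]
  exact .iUnion fun K => .iInter fun k => .iInter fun hk =>
    (show ⨆ j ≥ k, s j ≤ ⨆ j ≥ n, s j from iSup₂_mono' fun j hj => ⟨j, by omega, le_rfl⟩) _ (hE k)

lemma measurable_iSup_comap_sub_succ {f : ℕ → Ω → ℝ}
    (hf : ∀ ω, Tendsto (fun n => f n ω) atTop (𝓝 0)) (k : ℕ) :
    Measurable[⨆ j ≥ k, MeasurableSpace.comap (fun ω => f j ω - f (j + 1) ω) inferInstance]
      (f k) := by
  let _ : MeasurableSpace Ω :=
    ⨆ j ≥ k, MeasurableSpace.comap (fun ω => f j ω - f (j + 1) ω) inferInstance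
  have hinc : ∀ j ≥ k, Measurable fun ω => f j ω - f (j + 1) ω := fun j hj =>
    measurable_iff_comap_le.2 <| le_iSup₂ (f := fun j (_ : j ≥ k) =>
      MeasurableSpace.comap (fun ω => f j ω - f (j + 1) ω) inferInstance) j hj
  refine measurable_of_tendsto_metrizable' atTop
    (f := fun N ω => ∑ j ∈ Finset.Ico k N, (f j ω - f (j + 1) ω))
    (fun N => Finset.measurable_sum _ fun j hj => hinc j (Finset.mem_Ico.1 hj).1)
    (tendsto_pi_nhds.2 fun ω => ?_)
  have hlim : Tendsto (fun N => f k ω - f N ω) atTop (𝓝 (f k ω)) := by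
    simpa using tendsto_const_nhds.sub (hf ω)
  refine hlim.congr' ?_
  filter_upwards [eventually_ge_atTop k] with N hN
  rw [← neg_sub (f N ω), ← Finset.sum_Ico_sub (fun j => f j ω) hN, ← Finset.sum_neg_distrib]
  simp

lemma measure_setOf_eventually_le [MeasurableSpace Ω] {μ : Measure Ω} {E : ℕ → Set Ω} {q : ℝ≥0∞}
    (h : ∀ k, μ (E k) ≤ q) : μ {ω | ∀ᶠ k in atTop, ω ∈ E k} ≤ q := by
  have hunion : {ω | ∀ᶠ k in atTop, ω ∈ E k} = ⋃ K, ⋂ k ≥ K, E k := by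
    ext ω
    simp only [eventually_atTop, mem_iUnion, mem_iInter]
    rfl
  have hmono : Monotone fun K => ⋂ k ≥ K, E k := fun K K' hK =>
    iInter₂_mono' fun k hk => ⟨k, hK.trans hk, subset_rfl⟩
  rw [hunion, hmono.measure_iUnion]
  exact iSup_le fun K => (measure_mono (biInter_subset_of_mem le_rfl)).trans (h K)

lemma gaussianReal_Ici_neg_sqrt {s : ℝ} (hs : 0 < s) :
    gaussianReal 0 s.toNNReal (Ici (-√s)) = gaussianReal 0 1 (Ici (-1)) := by
  have hscale : (gaussianReal 0 1).map (√s * ·) = gaussianReal 0 s.toNNReal := by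
    rw [gaussianReal_map_const_mul, mul_zero, mul_one]
    congr 1
    ext
    simp [Real.sq_sqrt hs.le, hs.le]
  rw [← hscale, Measure.map_apply (measurable_const_mul _) measurableSet_Ici]
  congr 1
  ext x
  simp only [mem_preimage, mem_Ici]
  rw [show -√s = √s * (-1) by ring, mul_le_mul_iff_of_pos_left (Real.sqrt_pos.2 hs)]

lemma gaussianReal_Ici_neg_one_lt_one : gaussianReal 0 1 (Ici (-1)) < 1 := by
  have hpos : gaussianReal 0 1 (Iio (-1)) ≠ 0 := fun h0 => by
    have := gaussianReal_absolutelyContinuous' 0 one_ne_zero h0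
    simp at this
  rw [← compl_Iio, prob_compl_eq_one_sub measurableSet_Iio]
  exact ENNReal.sub_lt_self ENNReal.one_ne_top one_ne_zero hpos

variable [MeasurableSpace Ω] {P : Measure Ω} {B : ℝ → Ω → ℝ}

lemma IsStandardBM.map_eq_gaussianReal (hB : IsStandardBM P B) {s : ℝ} (hs : 0 ≤ s) :
    P.map (B s) = gaussianReal 0 s.toNNReal := by
  simpa [hB.init] using hB.gauss 0 s le_rfl hs

lemma IsStandardBM.iIndep_dyadic_increments [IsProbabilityMeasure P] (hB : IsStandardBM P B) :
    iIndep (fun k : ℕ => MeasurableSpace.comap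
      (fun ω => B ((2:ℝ)⁻¹ ^ k) ω - B ((2:ℝ)⁻¹ ^ (k + 1)) ω) inferInstance) P := by
  have hdyadic_le : ∀ {i j : ℕ}, i ≤ j → (2:ℝ)⁻¹ ^ j ≤ 2⁻¹ ^ i := fun hij =>
    pow_le_pow_of_le_one (by norm_num) (by norm_num) hij
  refine iIndep_of_indep_of_le (F := fun k => natF B ((2:ℝ)⁻¹ ^ (k + 1)))
    (fun k => hB.indep _ _ (by positivity) (hdyadic_le k.le_succ)) fun i j hij => ?_
  exact measurable_iff_comap_le.1 <|
    (measurable_natF ⟨by positivity, hdyadic_le hij⟩).sub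
      (measurable_natF ⟨by positivity, hdyadic_le (by omega)⟩)

theorem IsStandardBM.measure_eventually_le_dyadic_eq_zero [IsProbabilityMeasure P]
    (hB : IsStandardBM P B) (c : ℝ) :
    P {ω | ∀ᶠ k in atTop, c * (2:ℝ)⁻¹ ^ k ≤ B ((2:ℝ)⁻¹ ^ k) ω} = 0 := by
  have hdyadic : Tendsto (fun k : ℕ => (2:ℝ)⁻¹ ^ k) atTop (𝓝 0) :=
    tendsto_pow_atTop_nhds_zero_of_lt_one (by norm_num) (by norm_num)
  have hB0 : ∀ ω, Tendsto (fun k : ℕ => B ((2:ℝ)⁻¹ ^ k) ω) atTop (𝓝 0) := fun ω => by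
    have := ((hB.cont ω).tendsto 0).comp hdyadic
    rwa [hB.init] at this
  have htail := measurableSet_limsup_setOf_eventually
    fun k => measurable_iSup_comap_sub_succ hB0 k (measurableSet_Ici (a := c * (2:ℝ)⁻¹ ^ k))
  refine (measure_zero_or_one_of_measurableSet_limsup_atTop
    (fun k => measurable_iff_comap_le.1 ((hB.meas _).sub (hB.meas _)))
    hB.iIndep_dyadic_increments htail).resolve_right (ne_of_lt ?_)
  have hsqrt : ∀ᶠ k : ℕ in atTop, -√((2:ℝ)⁻¹ ^ k) ≤ c * (2:ℝ)⁻¹ ^ k := by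
    have hc : Tendsto (fun k : ℕ => c * √((2:ℝ)⁻¹ ^ k)) atTop (𝓝 0) := by
      simpa using hdyadic.sqrt.const_mul c
    filter_upwards [hc.eventually (lt_mem_nhds (show (-1:ℝ) < 0 by norm_num))] with k hk
    have hsq : c * (2:ℝ)⁻¹ ^ k + √((2:ℝ)⁻¹ ^ k) = (c * √((2:ℝ)⁻¹ ^ k) + 1) * √((2:ℝ)⁻¹ ^ k) := by
      rw [add_mul, mul_assoc, Real.mul_self_sqrt (by positivity), one_mul]
    linarith [mul_nonneg (by linarith : (0:ℝ) ≤ c * √((2:ℝ)⁻¹ ^ k) + 1)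
      (Real.sqrt_nonneg ((2:ℝ)⁻¹ ^ k))]
  calc P {ω | ∀ᶠ k in atTop, c * (2:ℝ)⁻¹ ^ k ≤ B ((2:ℝ)⁻¹ ^ k) ω}
      ≤ P {ω | ∀ᶠ k in atTop, ω ∈ B ((2:ℝ)⁻¹ ^ k) ⁻¹' Ici (-√((2:ℝ)⁻¹ ^ k))} :=
        measure_mono fun ω hω => (hω.and hsqrt).mono fun k hk => hk.2.trans hk.1
    _ ≤ gaussianReal 0 1 (Ici (-1)) := measure_setOf_eventually_le fun k => by
        rw [← Measure.map_apply (hB.meas _) measurableSet_Ici,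
          hB.map_eq_gaussianReal (by positivity), gaussianReal_Ici_neg_sqrt (by positivity)]
    _ < 1 := gaussianReal_Ici_neg_one_lt_one

end ZeroOne

section Independence

variable {Ω : Type*} {G mΩ : MeasurableSpace Ω} {P : Measure Ω} [IsProbabilityMeasure P]
  {L M : Ω → ℝ}

/-- The pair `(L, (M, 1_A))` has the product law, so Fubini integrates out `L`. -/
lemma measure_setOf_lt_inter_eq_setLIntegral (hG : G ≤ mΩ) (hL : Measurable L)
    (hind : Indep (MeasurableSpace.comap L inferInstance) G P) (hM : Measurable[G] M)
    {A : Set Ω} (hA : MeasurableSet[G] A) :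
    P ({ω | L ω < M ω} ∩ A) = ∫⁻ ω in A, P.map L (Iio (M ω)) ∂P := by
  set W : Ω → ℝ × ℝ := fun ω => (M ω, A.indicator 1 ω)
  have hWG : Measurable[G] W := hM.prodMk (measurable_const.indicator hA)
  have hW : Measurable W := hWG.mono hG le_rfl
  have hLW : IndepFun L W P :=
    (IndepFun_iff_Indep _ _ _).2 (indep_of_indep_of_le_right hind (measurable_iff_comap_le.1 hWG))
  set S : Set (ℝ × ℝ × ℝ) := {p | p.1 < p.2.1 ∧ p.2.2 = 1}
  have hS : MeasurableSet S :=
    (measurableSet_lt measurable_fst measurable_snd.fst).inter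
      (measurable_snd.snd (measurableSet_singleton 1))
  have hpre : {ω | L ω < M ω} ∩ A = (fun ω => (L ω, W ω)) ⁻¹' S := by
    ext ω
    by_cases hω : ω ∈ A <;> simp [W, S, hω]
  rw [hpre, ← Measure.map_apply (hL.prodMk hW) hS,
    (indepFun_iff_map_prod_eq_prod_map_map hL.aemeasurable hW.aemeasurable).1 hLW,
    Measure.prod_apply_symm hS, lintegral_map (measurable_measure_prodMk_right hS) hW,
    ← lintegral_indicator (hG _ hA)]
  congr 1
  ext ω
  by_cases hω : ω ∈ A <;> simp [W, S, hω, Iio]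

theorem condExp_indicator_setOf_lt_ae_eq (hG : G ≤ mΩ) (hL : Measurable L)
    (hind : Indep (MeasurableSpace.comap L inferInstance) G P) (hM : Measurable[G] M) :
    P[{ω | L ω < M ω}.indicator (fun _ => (1 : ℝ)) | G] =ᵐ[P]
      fun ω => (P {ω' | L ω' < M ω}).toReal := by
  have hcdf : ∀ x, P {ω' | L ω' < x} = P.map L (Iio x) :=
    fun x => (Measure.map_apply hL measurableSet_Iio).symm
  have hcdf_meas : Measurable fun x : ℝ => P.map L (Iio x) :=
    Monotone.measurable fun a b hab => measure_mono (Iio_subset_Iio hab)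
  have hE : MeasurableSet {ω | L ω < M ω} := measurableSet_lt hL (hM.mono hG le_rfl)
  have hFM : Measurable[G] fun ω => (P.map L (Iio (M ω))).toReal :=
    (hcdf_meas.comp hM).ennreal_toReal
  simp_rw [hcdf]
  refine (ae_eq_condExp_of_forall_setIntegral_eq hG ((integrable_const 1).indicator hE)
    (fun A _ _ => Integrable.integrableOn ?_) (fun A hA _ => ?_)
    hFM.stronglyMeasurable.aestronglyMeasurable).symm
  · refine .of_bound (hFM.mono hG le_rfl).aestronglyMeasurable 1 (ae_of_all _ fun ω => ?_)
    have : IsProbabilityMeasure (P.map L) := Measure.isProbabilityMeasure_map hL.aemeasurable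
    simpa using ENNReal.toReal_mono ENNReal.one_ne_top prob_le_one
  · rw [integral_indicator_const _ hE, measureReal_restrict_apply hE, smul_eq_mul, mul_one,
      measureReal_def, integral_toReal (f := fun ω => P.map L (Iio (M ω)))
        (hcdf_meas.comp (hM.mono hG le_rfl)).aemeasurable (ae_of_all _ fun _ => measure_lt_top _ _),
      measure_setOf_lt_inter_eq_setLIntegral hG hL hind hM hA]

end Independence

section GBM

variable {Ω : Type*} {B X : ℝ → Ω → ℝ} {m σ : ℝ}

lemma eventually_le_dyadic_of_eventually_one_lt (hσ : 0 < σ)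
    (hX : ∀ t ω, X t ω = exp (m * t + σ * B t ω)) {ω : Ω}
    (h : ∀ᶠ s in 𝓝[>] 0, 1 < X s ω) :
    ∀ᶠ k in atTop, -(m / σ) * (2:ℝ)⁻¹ ^ k ≤ B ((2:ℝ)⁻¹ ^ k) ω := by
  filter_upwards [(tendsto_pow_atTop_nhdsWithin_zero_of_lt_one (r := (2:ℝ)⁻¹) (by norm_num)
    (by norm_num)).eventually h] with k hk
  rw [hX, one_lt_exp_iff] at hk
  rw [show -(m / σ) * (2:ℝ)⁻¹ ^ k = -(m * 2⁻¹ ^ k) / σ by ring, div_le_iff₀ hσ]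
  linarith

variable [MeasurableSpace Ω] {P : Measure Ω}

lemma IsStandardBM.continuous_gbm (hB : IsStandardBM P B)
    (hX : ∀ t ω, X t ω = exp (m * t + σ * B t ω)) (ω : Ω) : Continuous fun u => X u ω := by
  simp_rw [hX]
  have := hB.cont ω
  fun_prop

lemma IsStandardBM.measurable_gbm (hB : IsStandardBM P B)
    (hX : ∀ t ω, X t ω = exp (m * t + σ * B t ω)) (u : ℝ) : Measurable (X u) := by
  simp_rw [funext (hX u)]
  have := hB.meas u
  fun_prop

lemma setOf_lt_hitTime_ae_eq [IsProbabilityMeasure P] (hB : IsStandardBM P B) (hσ : 0 < σ)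
    (hX : ∀ t ω, X t ω = exp (m * t + σ * B t ω)) (L : Ω → ℝ) {t : ℝ} (ht : 0 ≤ t) :
    {ω | ENNReal.ofReal t < hitTime X (fun _ ω' => L ω') ω} =ᵐ[P]
      {ω | L ω < runMin X 0 t ω} := by
  have hc := hB.continuous_gbm hX
  have hX0 : ∀ ω, X 0 ω = 1 := fun ω => by simp [hX, hB.init]
  refine EventuallyLE.antisymm ?_
    (Eventually.of_forall fun ω => lt_hitTime_of_lt_runMin (hc ω) ht)
  filter_upwards [measure_eq_zero_iff_ae_notMem.1
    (hB.measure_eventually_le_dyadic_eq_zero (-(m / σ)))] with ω hω hτ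
  by_contra hM
  exact hω (eventually_le_dyadic_of_eventually_one_lt hσ hX
    (eventually_one_lt_of_lt_hitTime (hc ω) (hX0 ω) ht hτ (not_lt.1 hM)))

end GBM

theorem cond_survival_up_to_now_C_investor_general
    {Ω : Type*} [MeasurableSpace Ω] (P : Measure Ω) [IsProbabilityMeasure P]
    (B : ℝ → Ω → ℝ) (hB : IsStandardBM P B) (m σ : ℝ) (hσ : 0 < σ)
    (X : ℝ → Ω → ℝ) (hX : ∀ t ω, X t ω = Real.exp (m * t + σ * B t ω))
    (L : Ω → ℝ) (hLm : Measurable L)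
    (T : ℝ) (hind : Indep (MeasurableSpace.comap L inferInstance) (natF X T) P)
    (t : ℝ) (ht : 0 ≤ t) (htT : t < T) :
    P[Set.indicator {ω | ENNReal.ofReal t < hitTime X (fun _ ω' => L ω') ω}
        (fun _ => (1 : ℝ)) | natF X t] =ᵐ[P]
      fun ω => (P {ω' | L ω' < runMin X 0 t ω}).toReal := by
  have hind_t : Indep (MeasurableSpace.comap L inferInstance) (natF X t) P :=
    indep_of_indep_of_le_right hind (natF_mono htT.le)
  calc P[Set.indicator {ω | ENNReal.ofReal t < hitTime X (fun _ ω' => L ω') ω}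
        (fun _ => (1 : ℝ)) | natF X t]
      =ᵐ[P] P[{ω | L ω < runMin X 0 t ω}.indicator (fun _ => (1 : ℝ)) | natF X t] :=
        condExp_congr_ae (indicator_ae_eq_of_ae_eq_set (setOf_lt_hitTime_ae_eq hB hσ hX L ht))
    _ =ᵐ[P] fun ω => (P {ω' | L ω' < runMin X 0 t ω}).toReal :=
        condExp_indicator_setOf_lt_ae_eq (natF_le (hB.measurable_gbm hX) t) hLm hind_t
          (measurable_runMin (hB.continuous_gbm hX) ht)

theorem cond_survival_up_to_now_C_investor
    {Ω : Type*} [MeasurableSpace Ω] (P : Measure Ω) [IsProbabilityMeasure P]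
    (B : ℝ → Ω → ℝ) (hB : IsStandardBM P B) (m σ : ℝ) (hσ : 0 < σ)
    (X : ℝ → Ω → ℝ) (hX : ∀ t ω, X t ω = Real.exp (m * t + σ * B t ω))
    (L : Ω → ℝ) (hLm : Measurable L) (hLpos : ∀ ω, 0 < L ω)
    (T : ℝ) (hind : Indep (MeasurableSpace.comap L inferInstance) (natF X T) P)
    (t : ℝ) (ht : 0 ≤ t) (htT : t < T) :
    P[Set.indicator {ω | ENNReal.ofReal t < hitTime X (fun _ ω' => L ω') ω}
        (fun _ => (1 : ℝ)) | natF X t] =ᵐ[P]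
      fun ω => (P {ω' | L ω' < runMin X 0 t ω}).toReal :=
  cond_survival_up_to_now_C_investor_general P B hB m σ hσ X hX L hLm T hind t ht htT
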